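/- Suppose the modular program signature is structurally valid. For every j ∈ {0, 1, …, n}, the set { I | (H, I) ∈ N_j } equals the set { I ∩ impls(H_{1:j}) | I a valid selection } (the algorithm's partial selections at stage j are exactly the prefixes of valid selections restricted to the first j holes). -/
import Mathlib


/-- `pars I` is the image of `par` on the finset `I` of implementations. -/
def pars {ι κ : Type*} [DecidableEq κ] (par : ι → κ) (I : Finset ι) : Finset κ :=
  I.image par

/-- `holesOf I` is the union of the holes referenced by the implementations in `I`. -/
def holesOf {ι κ : Type*} [DecidableEq ι] [DecidableEq κ]
    (holes : ι → Finset κ) (I : Finset ι) : Finset κ :=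
  I.biUnion holes

/-- `implsH h` is the finset of implementations of the hole `h`. -/
def implsH {ι κ : Type*} [Fintype ι] [DecidableEq κ] (par : ι → κ) (h : κ) : Finset ι :=
  Finset.univ.filter (fun i => par i = h)

/-- `implsHs H` is the finset of implementations of holes in `H`. -/
def implsHs {ι κ : Type*} [Fintype ι] [DecidableEq κ] (par : ι → κ) (H : Finset κ) : Finset ι :=
  Finset.univ.filter (fun i => par i ∈ H)

/-- `siblings I₁ I₂` is the finset of pairs of distinct implementations across `I₁`, `I₂`
sharing a parent hole. -/
def siblings {ι κ : Type*} [DecidableEq ι] [DecidableEq κ]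
    (par : ι → κ) (I₁ I₂ : Finset ι) : Finset (ι × ι) :=
  (I₁ ×ˢ I₂).filter (fun p => p.1 ≠ p.2 ∧ par p.1 = par p.2)

/-- A finset `I` of implementations is a valid selection. -/
def ValidSelection {ι κ : Type*} [DecidableEq ι] [DecidableEq κ]
    (par : ι → κ) (holes : ι → Finset κ) (baseHoles : Finset κ) (I : Finset ι) : Prop :=
  pars par I = baseHoles ∪ holesOf holes I ∧ siblings par I I = ∅

/-- The module dependency graph: vertices are implementations plus one base node (`none`);
there is an edge `i₁ → i₂` whenever `par i₂ ∈ holes i₁`, and an edge `base → i₂`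
whenever `par i₂ ∈ baseHoles`. -/
def MDG {ι κ : Type*} (par : ι → κ) (holes : ι → Finset κ) (baseHoles : Finset κ) :
    Option ι → Option ι → Prop
  | some i₁, some i₂ => par i₂ ∈ holes i₁
  | none, some i₂ => par i₂ ∈ baseHoles
  | _, none => False

/-- Structural validity of a modular program signature: the module dependency graph has
no directed cycle, and every hole has at least one implementation. -/
def StructValid {ι κ : Type*} [Fintype ι] [DecidableEq κ]
    (par : ι → κ) (holes : ι → Finset κ) (baseHoles : Finset κ) : Prop :=
  Irreflexive (Relation.TransGen (MDG par holes baseHoles)) ∧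
  ∀ h : κ, (implsH par h).Nonempty

/-- The hole dependency graph `G_Dep`: an edge `h₁ → h₂` iff some implementation of `h₁`
references `h₂`. -/
def GDep {ι κ : Type*} (par : ι → κ) (holes : ι → Finset κ) (h₁ h₂ : κ) : Prop :=
  ∃ i : ι, par i = h₁ ∧ h₂ ∈ holes i

/-- `Hs 1, …, Hs n` is an enumeration of all holes in a topological order of the hole
dependency graph. -/
def TopoEnum {ι κ : Type*} (par : ι → κ) (holes : ι → Finset κ) (n : ℕ) (Hs : ℕ → κ) : Prop :=
  (∀ h : κ, ∃ j, 1 ≤ j ∧ j ≤ n ∧ Hs j = h) ∧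
  (∀ j k, 1 ≤ j → j ≤ n → 1 ≤ k → k ≤ n → Hs j = Hs k → j = k) ∧
  (∀ j k, 1 ≤ j → j ≤ n → 1 ≤ k → k ≤ n → GDep par holes (Hs j) (Hs k) → j < k)

/-- `Hpre Hs j` is the finset `{H₁, …, H_j}` of the first `j` holes of the enumeration. -/
def Hpre {κ : Type*} [DecidableEq κ] (Hs : ℕ → κ) (j : ℕ) : Finset κ :=
  (Finset.Icc 1 j).image Hs

/-- `expand-node(H, I, h)`. -/
def expandNode {ι κ : Type*} [DecidableEq ι] [DecidableEq κ]
    (par : ι → κ) (holes : ι → Finset κ) (H : Finset κ) (I : Finset ι) (h : κ) :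
    Set (Finset κ × Finset ι) :=
  if h ∈ H then
    {p | ∃ i : ι, par i = h ∧ p = (H ∪ holes i, insert i I)}
  else {(H, I)}

/-- `new-edges(H, I, h)`. -/
def newEdges {ι κ : Type*} [DecidableEq ι] [DecidableEq κ]
    (par : ι → κ) (holes : ι → Finset κ) (H : Finset κ) (I : Finset ι) (h : κ) :
    Set (Finset κ × Finset ι × Finset κ × Finset ι) :=
  if h ∈ H then
    {q | ∃ i₁ i₂ : ι, par i₁ = h ∧ par i₂ = h ∧ i₁ ≠ i₂ ∧
      q = (H ∪ holes i₁, insert i₁ I, H ∪ holes i₂, insert i₂ I)}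
  else ∅

/-- `expand-edge(H₁, I₁, H₂, I₂, h)`. -/
def expandEdge {ι κ : Type*} [DecidableEq ι] [DecidableEq κ]
    (par : ι → κ) (holes : ι → Finset κ)
    (H₁ : Finset κ) (I₁ : Finset ι) (H₂ : Finset κ) (I₂ : Finset ι) (h : κ) :
    Set (Finset κ × Finset ι × Finset κ × Finset ι) :=
  if h ∈ H₁ then
    if h ∈ H₂ then
      {q | ∃ i : ι, par i = h ∧
        q = (H₁ ∪ holes i, insert i I₁, H₂ ∪ holes i, insert i I₂)}
    else
      {q | ∃ i : ι, par i = h ∧ q = (H₁ ∪ holes i, insert i I₁, H₂, I₂)}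
  else
    if h ∈ H₂ then
      {q | ∃ i : ι, par i = h ∧ q = (H₁, I₁, H₂ ∪ holes i, insert i I₂)}
    else {(H₁, I₁, H₂, I₂)}

/-- `expand(N, E, h)`. -/
def expand {ι κ : Type*} [DecidableEq ι] [DecidableEq κ]
    (par : ι → κ) (holes : ι → Finset κ)
    (NE : Set (Finset κ × Finset ι) × Set (Finset κ × Finset ι × Finset κ × Finset ι))
    (h : κ) :
    Set (Finset κ × Finset ι) × Set (Finset κ × Finset ι × Finset κ × Finset ι) :=
  (⋃ p ∈ NE.1, expandNode par holes p.1 p.2 h,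
   (⋃ p ∈ NE.1, newEdges par holes p.1 p.2 h) ∪
     ⋃ q ∈ NE.2, expandEdge par holes q.1 q.2.1 q.2.2.1 q.2.2.2 h)

/-- The model-graph algorithm: `(algo … j)` is the pair `(N_j, E_j)`, starting from
`(N₀, E₀) = ({(baseHoles, ∅)}, ∅)` and expanding on the hole `Hs j` at stage `j`. -/
def algo {ι κ : Type*} [DecidableEq ι] [DecidableEq κ]
    (par : ι → κ) (holes : ι → Finset κ) (baseHoles : Finset κ) (Hs : ℕ → κ) :
    ℕ → Set (Finset κ × Finset ι) × Set (Finset κ × Finset ι × Finset κ × Finset ι)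
  | 0 => ({(baseHoles, (∅ : Finset ι))}, ∅)
  | j + 1 => expand par holes (algo par holes baseHoles Hs j) (Hs (j + 1))

section Aux
variable {ι κ : Type*}

lemma siblings_empty_iff [DecidableEq ι] [DecidableEq κ] (par : ι → κ) (I : Finset ι) :
    siblings par I I = ∅ ↔ ∀ a ∈ I, ∀ b ∈ I, par a = par b → a = b := by
  rw [siblings, Finset.filter_eq_empty_iff]
  simp only [Finset.mem_product, not_and, ne_eq, Decidable.not_not, Prod.forall, and_imp]
  constructor
  · intro h a ha b hb hpar
    by_contra hne
    exact absurd hpar (h a b ha hb hne)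
  · intro h a b hab1 hab2 hne hpar
    exact hne (h a hab1 b hab2 hpar)

lemma siblings_empty_subset [DecidableEq ι] [DecidableEq κ] (par : ι → κ) {I J : Finset ι}
    (hJI : J ⊆ I) (h : siblings par I I = ∅) : siblings par J J = ∅ := by
  rw [siblings_empty_iff] at h ⊢
  exact fun a ha b hb => h a (hJI ha) b (hJI hb)

lemma mem_pars [DecidableEq κ] {par : ι → κ} {I : Finset ι} {x : κ} :
    x ∈ pars par I ↔ ∃ a ∈ I, par a = x := by simp [pars]

lemma pars_insert [DecidableEq ι] [DecidableEq κ] (par : ι → κ) (I : Finset ι) (i : ι) :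
    pars par (insert i I) = insert (par i) (pars par I) := Finset.image_insert _ _ _

lemma mem_holesOf [DecidableEq ι] [DecidableEq κ] {holes : ι → Finset κ} {I : Finset ι} {x : κ} :
    x ∈ holesOf holes I ↔ ∃ a ∈ I, x ∈ holes a := by simp [holesOf]

lemma holesOf_insert [DecidableEq ι] [DecidableEq κ] (holes : ι → Finset κ) (I : Finset ι)
    (i : ι) : holesOf holes (insert i I) = holes i ∪ holesOf holes I :=
  Finset.biUnion_insert

lemma Hpre_zero [DecidableEq κ] (Hs : ℕ → κ) : Hpre Hs 0 = ∅ := by simp [Hpre]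

lemma Hpre_succ [DecidableEq κ] (Hs : ℕ → κ) (j : ℕ) :
    Hpre Hs (j + 1) = insert (Hs (j + 1)) (Hpre Hs j) := by
  rw [Hpre, Hpre, ← Finset.insert_Icc_right_eq_Icc_add_one (Nat.le_add_left 1 j), Finset.image_insert]

lemma mem_Hpre [DecidableEq κ] {Hs : ℕ → κ} {j : ℕ} {x : κ} :
    x ∈ Hpre Hs j ↔ ∃ m, 1 ≤ m ∧ m ≤ j ∧ Hs m = x := by
  simp only [Hpre, Finset.mem_image, Finset.mem_Icc]
  constructor
  · rintro ⟨m, ⟨h1, h2⟩, h3⟩; exact ⟨m, h1, h2, h3⟩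
  · rintro ⟨m, h1, h2, h3⟩; exact ⟨m, ⟨h1, h2⟩, h3⟩

/-- No implementation of a hole beyond the prefix references a hole inside the prefix. -/
lemma holes_disj_Hpre [DecidableEq κ] {par : ι → κ} {holes : ι → Finset κ} {n : ℕ} {Hs : ℕ → κ}
    (htopo : TopoEnum par holes n Hs) {j k : ℕ} (hjn : j ≤ n) (hk1 : 1 ≤ k) (hkn : k ≤ n)
    (hjk : j < k) {i : ι} (hpar : par i = Hs k) {x : κ} (hx : x ∈ holes i) :
    x ∉ Hpre Hs j := by
  intro hmem
  obtain ⟨m, hm1, hmj, hms⟩ := mem_Hpre.1 hmem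
  have : k < m := htopo.2.2 k m hk1 hkn hm1 (hmj.trans hjn) ⟨i, hpar, by rwa [hms]⟩
  omega

/-- A hole not in the prefix `Hpre Hs j` has index `> j`. -/
lemma exists_index_gt [DecidableEq κ] {par : ι → κ} {holes : ι → Finset κ} {n : ℕ} {Hs : ℕ → κ}
    (htopo : TopoEnum par holes n Hs) {j : ℕ} {x : κ} (hx : x ∉ Hpre Hs j) :
    ∃ k, 1 ≤ k ∧ k ≤ n ∧ j < k ∧ Hs k = x := by
  obtain ⟨k, hk1, hkn, hks⟩ := htopo.1 x
  refine ⟨k, hk1, hkn, ?_, hks⟩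
  by_contra hle
  exact hx (mem_Hpre.2 ⟨k, hk1, by omega, hks⟩)

/-- Any partial selection compatible with the prefix extends to a valid selection
adding only implementations of holes outside the prefix. -/
lemma extend_selection [Fintype ι] [DecidableEq ι] [Fintype κ] [DecidableEq κ]
    {par : ι → κ} {holes : ι → Finset κ} {baseHoles : Finset κ} {n : ℕ} {Hs : ℕ → κ}
    (hne : ∀ h : κ, (implsH par h).Nonempty)
    (htopo : TopoEnum par holes n Hs) {j : ℕ} (hjn : j ≤ n) :
    ∀ m (I : Finset ι), Fintype.card κ - (pars par I).card ≤ m →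
      siblings par I I = ∅ →
      pars par I ⊆ baseHoles ∪ holesOf holes I →
      (baseHoles ∪ holesOf holes I) ∩ Hpre Hs j ⊆ pars par I →
      ∃ I', I ⊆ I' ∧ ValidSelection par holes baseHoles I' ∧
        ∀ i ∈ I', par i ∈ Hpre Hs j → i ∈ I := by
  intro m
  induction m with
  | zero =>
    intro I hcard hsib hsub _
    refine ⟨I, subset_rfl, ⟨?_, hsib⟩, fun i hi _ => hi⟩
    have hcard' : Fintype.card κ ≤ (pars par I).card := by omega
    have huniv : pars par I = Finset.univ :=
      Finset.eq_univ_of_card _ (le_antisymm (Finset.card_le_univ _) hcard')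
    exact le_antisymm hsub (huniv ▸ Finset.subset_univ _)
  | succ m ih =>
    intro I hcard hsib hsub hpre
    by_cases heq : pars par I = baseHoles ∪ holesOf holes I
    · exact ⟨I, subset_rfl, ⟨heq, hsib⟩, fun i hi _ => hi⟩
    · have hssub : pars par I ⊂ baseHoles ∪ holesOf holes I := hsub.ssubset_of_ne heq
      obtain ⟨h, hhmem, hhnotin⟩ := Finset.exists_of_ssubset hssub
      obtain ⟨i, hi⟩ := hne h
      have hpari : par i = h := (Finset.mem_filter.1 hi).2
      have hhnpre : h ∉ Hpre Hs j := fun hc => hhnotin (hpre (Finset.mem_inter.2 ⟨hhmem, hc⟩))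
      obtain ⟨k, hk1, hkn, hjk, hks⟩ := exists_index_gt htopo hhnpre
      have hdisj : ∀ x ∈ holes i, x ∉ Hpre Hs j :=
        fun x hx => holes_disj_Hpre htopo hjn hk1 hkn hjk (hpari.trans hks.symm) hx
      have hinotI : i ∉ I := fun hc => hhnotin (mem_pars.2 ⟨i, hc, hpari⟩)
      have hparsI : pars par (insert i I) = insert h (pars par I) := by
        rw [pars_insert, hpari]
      obtain ⟨I', hII', hval, hrest⟩ := ih (insert i I)
        (by
          rw [hparsI, Finset.card_insert_of_notMem hhnotin]
          omega)
        (by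
          rw [siblings_empty_iff] at hsib ⊢
          intro a ha b hb hpab
          have key : ∀ c ∈ I, par c ≠ h := fun c hc hch => hhnotin (mem_pars.2 ⟨c, hc, hch⟩)
          rcases Finset.mem_insert.1 ha with hai | ha' <;>
            rcases Finset.mem_insert.1 hb with hbi | hb'
          · rw [hai, hbi]
          · exact absurd (by rw [← hpab, hai]; exact hpari) (key b hb')
          · exact absurd (by rw [hpab, hbi]; exact hpari) (key a ha')
          · exact hsib a ha' b hb' hpab)
        (by
          rw [hparsI, holesOf_insert]
          intro x hx
          rcases Finset.mem_insert.1 hx with rfl | hx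
          · rw [Finset.union_comm (holes i), ← Finset.union_assoc]
            exact Finset.mem_union_left _ hhmem
          · rw [Finset.union_comm (holes i), ← Finset.union_assoc]
            exact Finset.mem_union_left _ (hsub hx)
        )
        (by
          rw [hparsI, holesOf_insert]
          intro x hx
          obtain ⟨hx1, hx2⟩ := Finset.mem_inter.1 hx
          have : x ∈ baseHoles ∪ holesOf holes I := by
            rcases Finset.mem_union.1 hx1 with hx1 | hx1
            · exact Finset.mem_union_left _ hx1
            · rcases Finset.mem_union.1 hx1 with hx1 | hx1
              · exact absurd hx2 (hdisj x hx1)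
              · exact Finset.mem_union_right _ hx1
          exact Finset.mem_insert_of_mem (hpre (Finset.mem_inter.2 ⟨this, hx2⟩)))
      refine ⟨I', (Finset.subset_insert i I).trans hII', hval, fun a ha hpa => ?_⟩
      have := hrest a ha hpa
      rcases Finset.mem_insert.1 this with rfl | hmem
      · exact absurd (hpari ▸ hpa) hhnpre
      · exact hmem

end Aux
section Inv
variable {ι κ : Type*}

lemma algo_inv [Fintype ι] [DecidableEq ι] [Fintype κ] [DecidableEq κ]
    {par : ι → κ} {holes : ι → Finset κ} (baseHoles : Finset κ) {n : ℕ} {Hs : ℕ → κ}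
    (htopo : TopoEnum par holes n Hs) :
    ∀ j, j ≤ n → ∀ H I, ((H, I) ∈ (algo par holes baseHoles Hs j).1 ↔
      (H = baseHoles ∪ holesOf holes I ∧ pars par I = H ∩ Hpre Hs j ∧
        siblings par I I = ∅)) := by
  intro j
  induction j with
  | zero =>
    intro _ H I
    simp only [algo, Set.mem_singleton_iff, Prod.mk.injEq]
    constructor
    · rintro ⟨rfl, rfl⟩
      exact ⟨by simp [holesOf], by simp [pars, Hpre_zero], by simp [siblings]⟩
    · rintro ⟨h1, h2, h3⟩
      rw [Hpre_zero, Finset.inter_empty] at h2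
      have hIe : I = ∅ := Finset.image_eq_empty.1 h2
      subst hIe
      simp only [holesOf, Finset.biUnion_empty, Finset.union_empty] at h1
      exact ⟨h1, rfl⟩
  | succ j ih =>
    intro hjn H I
    have hjn' : j ≤ n := Nat.le_of_succ_le hjn
    have hnotpre : Hs (j + 1) ∉ Hpre Hs j := by
      intro hc
      obtain ⟨m, hm1, hmj, hms⟩ := mem_Hpre.1 hc
      have := htopo.2.1 m (j + 1) hm1 (le_trans hmj hjn') (by omega) hjn hms
      omega
    have hdisj : ∀ i : ι, par i = Hs (j + 1) → ∀ x ∈ holes i, x ∉ Hpre Hs (j + 1) := by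
      intro i hpi x hx hc
      rw [Hpre_succ] at hc
      rcases Finset.mem_insert.1 hc with hxh | hc'
      · have := htopo.2.2 (j + 1) (j + 1) (by omega) hjn (by omega) hjn
          ⟨i, hpi, hxh ▸ hx⟩
        omega
      · exact holes_disj_Hpre htopo hjn' (by omega) hjn (by omega) hpi hx hc'
    constructor
    · intro hmem
      simp only [algo, expand, Set.mem_iUnion] at hmem
      obtain ⟨⟨H₀, I₀⟩, hp, hmem⟩ := hmem
      obtain ⟨hH₀, hpars₀, hsib₀⟩ := (ih hjn' H₀ I₀).1 hp
      rw [expandNode] at hmem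
      by_cases hcase : Hs (j + 1) ∈ H₀
      · rw [if_pos hcase] at hmem
        obtain ⟨i, hpi, heq⟩ := hmem
        simp only [Prod.mk.injEq] at heq
        obtain ⟨rfl, rfl⟩ := heq
        refine ⟨?_, ?_, ?_⟩
        · rw [holesOf_insert, hH₀, Finset.union_assoc,
            Finset.union_comm (holesOf holes I₀)]
        · rw [pars_insert, hpi, hpars₀, Hpre_succ]
          ext x
          simp only [Finset.mem_insert, Finset.mem_inter, Finset.mem_union]
          constructor
          · rintro (rfl | ⟨hx1, hx2⟩)
            · exact ⟨Or.inl hcase, Or.inl rfl⟩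
            · exact ⟨Or.inl hx1, Or.inr hx2⟩
          · rintro ⟨hx1 | hx1, hx2⟩
            · rcases hx2 with rfl | hx2
              · exact Or.inl rfl
              · exact Or.inr ⟨hx1, hx2⟩
            · exact ((hdisj i hpi x hx1)
                (by rw [Hpre_succ]; exact Finset.mem_insert.2 hx2)).elim
        · rw [siblings_empty_iff] at hsib₀ ⊢
          have key : ∀ c ∈ I₀, par c ≠ Hs (j + 1) := by
            intro c hc hch
            have : Hs (j + 1) ∈ H₀ ∩ Hpre Hs j := hpars₀ ▸ mem_pars.2 ⟨c, hc, hch⟩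
            exact hnotpre (Finset.mem_inter.1 this).2
          intro a ha b hb hpab
          rcases Finset.mem_insert.1 ha with hai | ha' <;>
            rcases Finset.mem_insert.1 hb with hbi | hb'
          · rw [hai, hbi]
          · exact absurd (by rw [← hpab, hai]; exact hpi) (key b hb')
          · exact absurd (by rw [hpab, hbi]; exact hpi) (key a ha')
          · exact hsib₀ a ha' b hb' hpab
      · rw [if_neg hcase] at hmem
        rw [Set.mem_singleton_iff, Prod.mk.injEq] at hmem
        obtain ⟨rfl, rfl⟩ := hmem
        refine ⟨hH₀, ?_, hsib₀⟩
        rw [hpars₀, Hpre_succ]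
        ext x
        simp only [Finset.mem_inter, Finset.mem_insert]
        constructor
        · rintro ⟨hx1, hx2⟩; exact ⟨hx1, Or.inr hx2⟩
        · rintro ⟨hx1, rfl | hx2⟩
          · exact absurd hx1 hcase
          · exact ⟨hx1, hx2⟩
    · rintro ⟨hH, hpars, hsib⟩
      by_cases hcase : Hs (j + 1) ∈ H
      · have hhp : Hs (j + 1) ∈ pars par I := by
          rw [hpars]
          exact Finset.mem_inter.2 ⟨hcase, by
            rw [Hpre_succ]; exact Finset.mem_insert_self _ _⟩
        obtain ⟨i, hiI, hpi⟩ := mem_pars.1 hhp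
        have hins : insert i (I.erase i) = I := Finset.insert_erase hiI
        have hself : Hs (j + 1) ∉ holes i := by
          intro hc
          have := htopo.2.2 (j + 1) (j + 1) (by omega) hjn (by omega) hjn ⟨i, hpi, hc⟩
          omega
        have hholesI : holesOf holes I = holes i ∪ holesOf holes (I.erase i) := by
          rw [← hins, holesOf_insert, hins]
        have hHsplit : H = (baseHoles ∪ holesOf holes (I.erase i)) ∪ holes i := by
          rw [hH, hholesI, Finset.union_comm (holes i), ← Finset.union_assoc]
        have hhH₀ : Hs (j + 1) ∈ baseHoles ∪ holesOf holes (I.erase i) := by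
          have hc : Hs (j + 1) ∈ H := hcase
          rw [hHsplit] at hc
          rcases Finset.mem_union.1 hc with h1 | h1
          · exact h1
          · exact absurd h1 hself
        have huniq : ∀ a ∈ I, par a = Hs (j + 1) → a = i := fun a ha hpa =>
          (siblings_empty_iff par I).1 hsib a ha i hiI (hpa.trans hpi.symm)
        have hpars₀ : pars par (I.erase i) =
            (baseHoles ∪ holesOf holes (I.erase i)) ∩ Hpre Hs j := by
          ext x
          simp only [Finset.mem_inter]
          constructor
          · intro hx
            obtain ⟨a, ha, hpa⟩ := mem_pars.1 hx
            have haI : a ∈ I := Finset.mem_of_mem_erase ha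
            have hane : a ≠ i := Finset.ne_of_mem_erase ha
            have hxh : x ≠ Hs (j + 1) := fun hc => hane (huniq a haI (hpa.trans hc))
            have hxI : x ∈ H ∩ Hpre Hs (j + 1) := hpars ▸ mem_pars.2 ⟨a, haI, hpa⟩
            obtain ⟨hx1, hx2⟩ := Finset.mem_inter.1 hxI
            have hx2' : x ∈ Hpre Hs j := by
              rw [Hpre_succ] at hx2
              rcases Finset.mem_insert.1 hx2 with hc | hc
              · exact absurd hc hxh
              · exact hc
            refine ⟨?_, hx2'⟩
            rw [hHsplit] at hx1
            rcases Finset.mem_union.1 hx1 with h1 | h1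
            · exact h1
            · exact ((hdisj i hpi x h1) hx2).elim
          · rintro ⟨hx1, hx2⟩
            have hxh : x ≠ Hs (j + 1) := fun hc => hnotpre (hc ▸ hx2)
            have hxp : x ∈ pars par I := by
              rw [hpars]
              refine Finset.mem_inter.2 ⟨by
                rw [hHsplit]; exact Finset.mem_union_left _ hx1, by
                rw [Hpre_succ]; exact Finset.mem_insert_of_mem hx2⟩
            obtain ⟨a, ha, hpa⟩ := mem_pars.1 hxp
            have hane : a ≠ i := fun hc => hxh (by rw [← hpa, hc, hpi])
            exact mem_pars.2 ⟨a, Finset.mem_erase.2 ⟨hane, ha⟩, hpa⟩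
        have hsib₀ : siblings par (I.erase i) (I.erase i) = ∅ :=
          siblings_empty_subset par (Finset.erase_subset _ _) hsib
        have hmem₀ := (ih hjn' (baseHoles ∪ holesOf holes (I.erase i)) (I.erase i)).2
          ⟨rfl, hpars₀, hsib₀⟩
        simp only [algo, expand, Set.mem_iUnion]
        refine ⟨(baseHoles ∪ holesOf holes (I.erase i), I.erase i), hmem₀, ?_⟩
        rw [expandNode, if_pos hhH₀]
        exact ⟨i, hpi, by rw [Prod.mk.injEq]; exact ⟨hHsplit, hins.symm⟩⟩
      · have hmem₀ := (ih hjn' H I).2 ⟨hH, by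
          rw [hpars, Hpre_succ]
          ext x
          simp only [Finset.mem_inter, Finset.mem_insert]
          constructor
          · rintro ⟨hx1, rfl | hx2⟩
            · exact absurd hx1 hcase
            · exact ⟨hx1, hx2⟩
          · rintro ⟨hx1, hx2⟩; exact ⟨hx1, Or.inr hx2⟩, hsib⟩
        simp only [algo, expand, Set.mem_iUnion]
        refine ⟨(H, I), hmem₀, ?_⟩
        rw [expandNode, if_neg hcase]
        rfl

end Inv
/-- `N_j` represents exactly the model prefixes: for every `j ∈ {0, 1, …, n}`, the set of
partial selections appearing in `N_j` equals the set of restrictions of valid selections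
to the implementations of the first `j` holes. -/
theorem algo_nodes_are_prefixes {ι κ : Type*}
    [Fintype ι] [DecidableEq ι] [Fintype κ] [DecidableEq κ]
    (par : ι → κ) (holes : ι → Finset κ) (baseHoles : Finset κ)
    (hvalid : StructValid par holes baseHoles)
    (n : ℕ) (Hs : ℕ → κ) (htopo : TopoEnum par holes n Hs)
    (j : ℕ) (hjn : j ≤ n) :
    {I : Finset ι | ∃ H : Finset κ, (H, I) ∈ (algo par holes baseHoles Hs j).1} =
      {J : Finset ι | ∃ I : Finset ι, ValidSelection par holes baseHoles I ∧
        J = I ∩ implsHs par (Hpre Hs j)} := by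
  ext J
  simp only [Set.mem_setOf_eq]
  constructor
  · rintro ⟨H, hmem⟩
    obtain ⟨hH, hpars, hsib⟩ := (algo_inv baseHoles htopo j hjn H J).1 hmem
    obtain ⟨I', hsub, hval, hrest⟩ := extend_selection hvalid.2 htopo hjn
      (Fintype.card κ) J (Nat.sub_le _ _) hsib
      (by rw [hpars, ← hH]; exact Finset.inter_subset_left)
      (by rw [← hH, ← hpars])
    refine ⟨I', hval, ?_⟩
    ext a
    simp only [Finset.mem_inter, implsHs, Finset.mem_filter, Finset.mem_univ, true_and]
    constructor
    · intro ha
      refine ⟨hsub ha, ?_⟩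
      have : par a ∈ pars par J := mem_pars.2 ⟨a, ha, rfl⟩
      rw [hpars] at this
      exact (Finset.mem_inter.1 this).2
    · rintro ⟨ha1, ha2⟩
      exact hrest a ha1 ha2
  · rintro ⟨I, hval, rfl⟩
    refine ⟨baseHoles ∪ holesOf holes (I ∩ implsHs par (Hpre Hs j)), ?_⟩
    rw [algo_inv baseHoles htopo j hjn]
    set J := I ∩ implsHs par (Hpre Hs j) with hJ
    have hmemJ : ∀ a, a ∈ J ↔ a ∈ I ∧ par a ∈ Hpre Hs j := by
      intro a; simp [hJ, implsHs, Finset.mem_inter, Finset.mem_filter]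
    refine ⟨rfl, ?_, siblings_empty_subset par Finset.inter_subset_left hval.2⟩
    have h1 : pars par J = pars par I ∩ Hpre Hs j := by
      ext x; simp only [Finset.mem_inter]
      constructor
      · intro hx
        obtain ⟨a, ha, hpa⟩ := mem_pars.1 hx
        obtain ⟨haI, hapre⟩ := (hmemJ a).1 ha
        exact ⟨mem_pars.2 ⟨a, haI, hpa⟩, hpa ▸ hapre⟩
      · rintro ⟨hx1, hx2⟩
        obtain ⟨a, ha, hpa⟩ := mem_pars.1 hx1
        exact mem_pars.2 ⟨a, (hmemJ a).2 ⟨ha, hpa.symm ▸ hx2⟩, hpa⟩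
    have h2 : (baseHoles ∪ holesOf holes J) ∩ Hpre Hs j =
        (baseHoles ∪ holesOf holes I) ∩ Hpre Hs j := by
      ext x; simp only [Finset.mem_inter, Finset.mem_union]
      constructor
      · rintro ⟨hx1, hx2⟩
        refine ⟨?_, hx2⟩
        rcases hx1 with hx1 | hx1
        · exact Or.inl hx1
        · obtain ⟨a, ha, hxa⟩ := mem_holesOf.1 hx1
          exact Or.inr (mem_holesOf.2 ⟨a, ((hmemJ a).1 ha).1, hxa⟩)
      · rintro ⟨hx1, hx2⟩
        refine ⟨?_, hx2⟩
        rcases hx1 with hx1 | hx1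
        · exact Or.inl hx1
        · obtain ⟨a, ha, hxa⟩ := mem_holesOf.1 hx1
          by_cases hpa : par a ∈ Hpre Hs j
          · exact Or.inr (mem_holesOf.2 ⟨a, (hmemJ a).2 ⟨ha, hpa⟩, hxa⟩)
          · obtain ⟨k, hk1, hkn, hjk, hks⟩ := exists_index_gt htopo hpa
            exact absurd hx2 (holes_disj_Hpre htopo hjn hk1 hkn hjk hks.symm hxa)
    calc pars par J = pars par I ∩ Hpre Hs j := h1
      _ = (baseHoles ∪ holesOf holes I) ∩ Hpre Hs j := by rw [hval.1]
      _ = (baseHoles ∪ holesOf holes J) ∩ Hpre Hs j := h2.symm
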